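/- Space KAM and Space LAM are weakly bisimilar on Λdet: let R relate a Space KAM state (t,e,S) to the Space LAM state (ε,t,e,S). For every closed term t0 ∈ Λdet, on states reachable from the respective initial states of t0, R is a weak bisimulation: every Space KAM transition from s is matched by a nonempty sequence of at most three Space LAM transitions from the R-related state ending in an R-related state, and conversely every Space LAM transition sequence reaching an empty-dump state from an R-related state is matched by at most one Space KAM transition. Consequently the two complete runs from t0 correspond, and their space consumption is the same up to a fixed constant overhead. -/

import Mathlib

set_option autoImplicit false

/-! λ-terms with variable names in ℕ. -/
inductive Term : Type
  | var : ℕ → Term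
  | lam : ℕ → Term → Term
  | app : Term → Term → Term
deriving DecidableEq

namespace Term

/-- Free variables. -/
def fv : Term → Finset ℕ
  | var x => {x}
  | lam x t => fv t \ {x}
  | app t u => fv t ∪ fv u

/-- A term is closed if it has no free variables. -/
def closed (t : Term) : Prop := t.fv = ∅

/-- Substitution of `u` for the free occurrences of `x`; it is capture-avoiding
whenever the substituted term `u` is closed, which is the only case arising in
Closed Call-by-Name. -/
def subst (x : ℕ) (u : Term) : Term → Term
  | var y => if y = x then u else var y
  | lam y t => if y = x then lam y t else lam y (subst x u t)
  | app t r => app (subst x u t) (subst x u r)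

/-- In-order (left-to-right) enumeration of the constructors (as subterm occurrences). -/
def inorder : Term → List Term
  | var x => [var x]
  | lam x t => lam x t :: inorder t
  | app t u => inorder t ++ app t u :: inorder u

/-- Membership in the deterministic λ-calculus `Λdet`: the right subterm of every
application is a variable or an abstraction. -/
def IsDet : Term → Prop
  | var _ => True
  | lam _ t => IsDet t
  | app t u => IsDet t ∧ IsDet u ∧ ((∃ x, u = var x) ∨ ∃ x r, u = lam x r)

end Term

/-- Weak head reduction: `(λx.t) u r1 … rh →wh t{x:=u} r1 … rh`. -/
inductive Whr : Term → Term → Prop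
  | beta (x : ℕ) (t u : Term) : Whr (Term.app (Term.lam x t) u) (Term.subst x u t)
  | appL {t t' : Term} (u : Term) : Whr t t' → Whr (Term.app t u) (Term.app t' u)

def WhNormal (t : Term) : Prop := ∀ u, ¬ Whr t u

/-- `NSteps R n a b`: exactly `n` `R`-steps from `a` to `b`. -/
inductive NSteps {α : Type _} (R : α → α → Prop) : ℕ → α → α → Prop
  | refl (a : α) : NSteps R 0 a a
  | head {a b c : α} {n : ℕ} : R a b → NSteps R n b c → NSteps R (n + 1) a c

/-! Closures and (local) environments. -/
mutual
  inductive Clo : Type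
    | mk : Term → Env → Clo
  inductive Env : Type
    | nil : Env
    | cons : ℕ → Clo → Env → Env
end

def Env.lookup : Env → ℕ → Option Clo
  | .nil, _ => none
  | .cons y c e, x => if y = x then some c else Env.lookup e x

def Env.dom : Env → Finset ℕ
  | .nil => ∅
  | .cons x _ e => insert x (Env.dom e)

/-- Restriction `e|s` of an environment to a set of variables. -/
def Env.restrict : Env → Finset ℕ → Env
  | .nil, _ => .nil
  | .cons x c e, s => if x ∈ s then .cons x c (Env.restrict e s) else Env.restrict e s

mutual
  /-- Decoding of a closure into a λ-term. -/
  def Clo.decode : Clo → Term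
    | .mk t e => Env.decode t e
  /-- Decoding: `(t, ε)↓ = t`, `(t, [x←c]·e)↓ = (t{x:=c↓}, e)↓`. -/
  def Env.decode : Term → Env → Term
    | t, .nil => t
    | t, .cons x c e => Env.decode (Term.subst x (Clo.decode c) t) e
end

mutual
  /-- Hereditary number of closures in a closure (without sharing). -/
  def Clo.count : Clo → ℕ
    | .mk _ e => 1 + Env.count e
  def Env.count : Env → ℕ
    | .nil => 0
    | .cons _ c e => Clo.count c + Env.count e
end

mutual
  /-- A closure `(t,e)` is closed: `fv t ⊆ dom e` and hereditarily so. -/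
  def Clo.Closed : Clo → Prop
    | .mk t e => t.fv ⊆ e.dom ∧ Env.ClosedE e
  def Env.ClosedE : Env → Prop
    | .nil => True
    | .cons _ c e => Clo.Closed c ∧ Env.ClosedE e
end

mutual
  /-- Environment domain invariant: `dom e = fv t`, hereditarily. -/
  def Clo.DomInv : Clo → Prop
    | .mk t e => e.dom = t.fv ∧ Env.DomInvE e
  def Env.DomInvE : Env → Prop
    | .nil => True
    | .cons _ c e => Clo.DomInv c ∧ Env.DomInvE e
end

/-- Size of the left address of (the first occurrence of) `u` in the code `t0`:
the binary length of its index in the in-order enumeration of the constructors of `t0`. -/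
def addrSize (t0 u : Term) : ℕ := Nat.size (t0.inorder.idxOf u)

mutual
  /-- Size of a closure, relative to the initial code `t0`. -/
  def Clo.size : Term → Clo → ℕ
    | t0, .mk u e => addrSize t0 u + Env.sizeE t0 e
  /-- Size of an environment, relative to the initial code `t0`. -/
  def Env.sizeE : Term → Env → ℕ
    | _, .nil => 0
    | t0, .cons x c e => addrSize t0 (Term.var x) + Clo.size t0 c + Env.sizeE t0 e
end

def stackSize (t0 : Term) (S : List Clo) : ℕ := (S.map (Clo.size t0)).sum

/-- States of the (Naive/Space) KAM. -/
structure State where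
  tm : Term
  env : Env
  stk : List Clo

/-- Size of a state, relative to the initial code `t0`. -/
def State.size (t0 : Term) (s : State) : ℕ :=
  addrSize t0 s.tm + Env.sizeE t0 s.env + stackSize t0 s.stk

/-- Closure count of a state: total number of closures occurring in it,
hereditarily and without sharing (the active term/environment pair is a closure). -/
def State.count (s : State) : ℕ :=
  1 + Env.count s.env + (s.stk.map Clo.count).sum

def State.decode (s : State) : Term :=
  s.stk.foldl (fun a c => Term.app a c.decode) (Env.decode s.tm s.env)

def initState (t : Term) : State := ⟨t, .nil, []⟩

/-! The Naive KAM. -/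
inductive NK : State → State → Prop
  | sea (t u : Term) (e : Env) (S : List Clo) :
      NK ⟨.app t u, e, S⟩ ⟨t, e, .mk u e :: S⟩
  | beta (x : ℕ) (t : Term) (e : Env) (c : Clo) (S : List Clo) :
      NK ⟨.lam x t, e, c :: S⟩ ⟨t, .cons x c e, S⟩
  | sub {x : ℕ} {e : Env} {u : Term} {e' : Env} (S : List Clo) :
      Env.lookup e x = some (.mk u e') → NK ⟨.var x, e, S⟩ ⟨u, e', S⟩

def NKFinal (s : State) : Prop := ∀ s', ¬ NK s s'

/-- Naive KAM runs counting the number of β-transitions. -/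
inductive NKRun : ℕ → State → State → Prop
  | refl (s : State) : NKRun 0 s s
  | sea {t u : Term} {e : Env} {S : List Clo} {s' : State} {n : ℕ} :
      NKRun n ⟨t, e, .mk u e :: S⟩ s' → NKRun n ⟨.app t u, e, S⟩ s'
  | beta {x : ℕ} {t : Term} {e : Env} {c : Clo} {S : List Clo} {s' : State} {n : ℕ} :
      NKRun n ⟨t, .cons x c e, S⟩ s' → NKRun (n + 1) ⟨.lam x t, e, c :: S⟩ s'
  | sub {x : ℕ} {e : Env} {u : Term} {e' : Env} {S : List Clo} {s' : State} {n : ℕ} :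
      Env.lookup e x = some (.mk u e') → NKRun n ⟨u, e', S⟩ s' → NKRun n ⟨.var x, e, S⟩ s'

/-! The Space KAM. -/
inductive SK : State → State → Prop
  | seav {t : Term} {x : ℕ} {e : Env} {c : Clo} (S : List Clo) :
      Env.lookup e x = some c →
      SK ⟨.app t (.var x), e, S⟩ ⟨t, e.restrict t.fv, c :: S⟩
  | seanv {t u : Term} {e : Env} (S : List Clo) :
      (∀ x, u ≠ .var x) →
      SK ⟨.app t u, e, S⟩ ⟨t, e.restrict t.fv, .mk u (e.restrict u.fv) :: S⟩
  | betaw {x : ℕ} {t : Term} {e : Env} (c : Clo) (S : List Clo) :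
      x ∉ t.fv → SK ⟨.lam x t, e, c :: S⟩ ⟨t, e, S⟩
  | betanw {x : ℕ} {t : Term} {e : Env} (c : Clo) (S : List Clo) :
      x ∈ t.fv → SK ⟨.lam x t, e, c :: S⟩ ⟨t, .cons x c e, S⟩
  | sub {x : ℕ} {e : Env} {u : Term} {e' : Env} (S : List Clo) :
      Env.lookup e x = some (.mk u e') → SK ⟨.var x, e, S⟩ ⟨u, e', S⟩

def SKFinal (s : State) : Prop := ∀ s', ¬ SK s s'

/-- Space KAM runs counting the number of β-transitions (`→βw` and `→β¬w`). -/
inductive SKRun : ℕ → State → State → Prop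
  | refl (s : State) : SKRun 0 s s
  | seav {t : Term} {x : ℕ} {e : Env} {c : Clo} {S : List Clo} {s' : State} {n : ℕ} :
      Env.lookup e x = some c →
      SKRun n ⟨t, e.restrict t.fv, c :: S⟩ s' → SKRun n ⟨.app t (.var x), e, S⟩ s'
  | seanv {t u : Term} {e : Env} {S : List Clo} {s' : State} {n : ℕ} :
      (∀ x, u ≠ .var x) →
      SKRun n ⟨t, e.restrict t.fv, .mk u (e.restrict u.fv) :: S⟩ s' →
      SKRun n ⟨.app t u, e, S⟩ s'
  | betaw {x : ℕ} {t : Term} {e : Env} {c : Clo} {S : List Clo} {s' : State} {n : ℕ} :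
      x ∉ t.fv → SKRun n ⟨t, e, S⟩ s' → SKRun (n + 1) ⟨.lam x t, e, c :: S⟩ s'
  | betanw {x : ℕ} {t : Term} {e : Env} {c : Clo} {S : List Clo} {s' : State} {n : ℕ} :
      x ∈ t.fv → SKRun n ⟨t, .cons x c e, S⟩ s' → SKRun (n + 1) ⟨.lam x t, e, c :: S⟩ s'
  | sub {x : ℕ} {e : Env} {u : Term} {e' : Env} {S : List Clo} {s' : State} {n : ℕ} :
      Env.lookup e x = some (.mk u e') → SKRun n ⟨u, e', S⟩ s' → SKRun n ⟨.var x, e, S⟩ s'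

/-! Concrete combinators. -/

/-- I := λx.x -/
def tmI : Term := .lam 0 (.var 0)
/-- θ := λx.λy.y (x x y)  (variables: x := 0, y := 1) -/
def tmTheta : Term := .lam 0 (.lam 1 (.app (.var 1) (.app (.app (.var 0) (.var 0)) (.var 1))))
/-- fix := θ θ -/
def tmFix : Term := .app tmTheta tmTheta
/-- x x y -/
def xxy : Term := .app (.app (.var 0) (.var 0)) (.var 1)
/-- toyaux := λf.λz. z f f I  (f := 3, z := 2) -/
def tmToyaux : Term := .lam 3 (.lam 2 (.app (.app (.app (.var 2) (.var 3)) (.var 3)) tmI))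
/-- toy := fix toyaux -/
def tmToy : Term := .app tmFix tmToyaux

/-- Scott encoding of binary strings (false = 0, true = 1; x0 := 4, x1 := 5, xε := 6):
`⟨ε⟩ := λx0.λx1.λxε.xε`, `⟨b·r⟩ := λx0.λx1.λxε.xb ⟨r⟩`. -/
def encStr : List Bool → Term
  | [] => .lam 4 (.lam 5 (.lam 6 (.var 6)))
  | b :: r => .lam 4 (.lam 5 (.lam 6 (.app (.var (if b then 5 else 4)) (encStr r))))

/-- A variable fresh for `t`. -/
def freshVar (t : Term) : ℕ := t.fv.sup id + 1

/-- η-expansion: `η(t) := λx. t x` with `x ∉ fv t`. -/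
def Term.eta (t : Term) : Term := .lam (freshVar t) (.app t (.var (freshVar t)))

/-- n-fold η-expansion. -/
def etaN (n : ℕ) (t : Term) : Term := Term.eta^[n] t

/-! Environment families for the Naive KAM scrolling invariant
(variables: x := 0, y := 1, z := 2, f := 3, x0 := 4, x1 := 5, xε := 6). -/

/-- `e0 := [x←(θ,ε)]·[y←(toyaux,ε)]`, `e(i+1) := [x←(x,ei)]·[y←(y,ei)]`. -/
def eE : ℕ → Env
  | 0 => .cons 0 (.mk tmTheta .nil) (.cons 1 (.mk tmToyaux .nil) .nil)
  | i + 1 => .cons 0 (.mk (.var 0) (eE i)) (.cons 1 (.mk (.var 1) (eE i)) .nil)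

/-- `e″0 := ε`, `e″(i+1) := [xε←(I,e′i)]·[x1←(f,e′i)]·[x0←(f,e′i)]·e″i`
(with `e′i` inlined). -/
def eDD (s : List Bool) : ℕ → Env
  | 0 => .nil
  | i + 1 =>
    let ep : Env := .cons 2 (.mk (encStr (s.drop i)) (eDD s i)) (.cons 3 (.mk xxy (eE i)) .nil)
    .cons 6 (.mk tmI ep) (.cons 5 (.mk (.var 3) ep) (.cons 4 (.mk (.var 3) ep) (eDD s i)))

/-- `e′i := [z←(⟨b(i+1)⋯bn⟩, e″i)]·[f←(x x y, ei)]`. -/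
def eP (s : List Bool) (i : ℕ) : Env :=
  .cons 2 (.mk (encStr (s.drop i)) (eDD s i)) (.cons 3 (.mk xxy (eE i)) .nil)

/-! The family `tn` for the abstract-time overhead explosion
(variables `xi := i`). -/

/-- `x0 x1 ⋯ xn`. -/
def varsApp : ℕ → Term
  | 0 => .var 0
  | n + 1 => .app (varsApp n) (.var (n + 1))

/-- Term component of `Sn`: `x0 x0` for `n = 0`, `x0 ⋯ xn` for `n ≥ 1`. -/
def sTerm : ℕ → Term
  | 0 => .app (.var 0) (.var 0)
  | n + 1 => varsApp (n + 1)

/-- `e0 := [x0←(I,ε)]`, `e(n+1) := [x(n+1)←Sn]·en`. -/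
def eN : ℕ → Env
  | 0 => .cons 0 (.mk tmI .nil) .nil
  | n + 1 => .cons (n + 1) (.mk (sTerm n) (eN n)) (eN n)

/-- `Sn := (sTerm n, en)`. -/
def sClo (n : ℕ) : Clo := .mk (sTerm n) (eN n)

/-- `Ci⟨t⟩ := λxi. t (x0 ⋯ xi)` (with `C0⟨t⟩ = λx0. t (x0 x0)`). -/
def cPlug (i : ℕ) (t : Term) : Term := .lam i (.app t (sTerm i))

/-- `C0⟨C1⟨⋯Cn⟨t⟩⋯⟩⟩`. -/
def nest (n : ℕ) (t : Term) : Term := (List.range (n + 1)).foldr cPlug t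

/-- `tn := C0⟨C1⟨⋯Cn⟨λy.I⟩⋯⟩⟩ I`. -/
def tN (n : ℕ) : Term := .app (nest n (.lam 1 tmI)) tmI

/-! Global-copy scrolling terms (s′ := 7, z := 2, x := 0, f := 3). -/

/-- `λf.λs′. s′ f f z` (free variable z). -/
def tScroll : Term :=
  .lam 3 (.lam 7 (.app (.app (.app (.var 7) (.var 3)) (.var 3)) (.var 2)))

/-- `glCpy := λx.( fix (λf.λs′. s′ f f x) ) x`. -/
def glCpy : Term :=
  .lam 0 (.app (.app tmFix
    (.lam 3 (.lam 7 (.app (.app (.app (.var 7) (.var 3)) (.var 3)) (.var 0)))))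
    (.var 0))

/-! The Space LAM. -/

structure LState where
  dump : List (Clo × List Clo)
  tm : Term
  env : Env
  stk : List Clo

inductive LAM : LState → LState → Prop
  | sea {D : List (Clo × List Clo)} {t u : Term} {e : Env} {S : List Clo} :
      LAM ⟨D, .app t u, e, S⟩ ⟨(.mk t (e.restrict t.fv), S) :: D, u, e.restrict u.fv, []⟩
  | ret {D : List (Clo × List Clo)} {u : Term} {e' : Env} {S : List Clo}
      {x : ℕ} {t : Term} {e : Env} :
      LAM ⟨(.mk u e', S) :: D, .lam x t, e, []⟩ ⟨D, u, e', .mk (.lam x t) e :: S⟩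
  | betaw {D : List (Clo × List Clo)} {x : ℕ} {t : Term} {e : Env} {c : Clo} {S : List Clo} :
      x ∉ t.fv → LAM ⟨D, .lam x t, e, c :: S⟩ ⟨D, t, e, S⟩
  | betanw {D : List (Clo × List Clo)} {x : ℕ} {t : Term} {e : Env} {c : Clo} {S : List Clo} :
      x ∈ t.fv → LAM ⟨D, .lam x t, e, c :: S⟩ ⟨D, t, .cons x c e, S⟩
  | sub {D : List (Clo × List Clo)} {x : ℕ} {e : Env} {u : Term} {e' : Env} {S : List Clo} :
      Env.lookup e x = some (.mk u e') → LAM ⟨D, .var x, e, S⟩ ⟨D, u, e', S⟩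

def LFinal (ls : LState) : Prop := ∀ ls', ¬ LAM ls ls'

/-- The Space KAM state `(t,e,S)` seen as the Space LAM state `(ε,t,e,S)`. -/
def embed (s : State) : LState := ⟨[], s.tm, s.env, s.stk⟩

def lInit (t : Term) : LState := ⟨[], t, .nil, []⟩

def LState.size (t0 : Term) (ls : LState) : ℕ :=
  (ls.dump.map (fun p => Clo.size t0 p.1 + stackSize t0 p.2)).sum +
    addrSize t0 ls.tm + Env.sizeE t0 ls.env + stackSize t0 ls.stk

/-- A LAM-sequence from `a` whose first state with empty dump after `a` is its target. -/
inductive LRunToEmpty : LState → LState → Prop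
  | single {a b : LState} : LAM a b → b.dump = [] → LRunToEmpty a b
  | cons {a b c : LState} : LAM a b → b.dump ≠ [] → LRunToEmpty b c → LRunToEmpty a c

/-! Log-sensitive Turing machines. -/

/-- Input-tape alphabet {0, 1, L, R}. -/
inductive ISym : Type | zero | one | lend | rend
deriving DecidableEq

/-- Work-tape alphabet {0, 1, □}. -/
inductive WSym : Type | zero | one | blank
deriving DecidableEq

/-- Head moves. -/
inductive Move : Type | L | R | N
deriving DecidableEq

/-- A log-sensitive Turing machine: states `Fin n`, initial state, final states
`qtrue = s1` and `qfalse = s0`, and a deterministic transition function reading the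
current state and the two scanned symbols, writing on the work tape, moving both
heads, and changing state (`none` = halt). -/
structure TM where
  n : ℕ
  start : Fin n
  qtrue : Fin n
  qfalse : Fin n
  δ : Fin n → ISym → WSym → Option (Fin n × WSym × Move × Move)

/-- A configuration: state, input-head position (on the tape `L i R`), and the
work tape split as (left part, reversed) / scanned symbol / (right part). -/
structure Config (M : TM) where
  q : Fin M.n
  ipos : ℕ
  wl : List WSym
  wcur : WSym
  wr : List WSym

/-- The symbol of the input tape `L i R` at a given position. -/
def inputAt (i : List Bool) (p : ℕ) : ISym :=
  if p = 0 then .lend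
  else if h : p - 1 < i.length then (if i.get ⟨p - 1, h⟩ then .one else .zero)
  else .rend

def moveIpos (p : ℕ) : Move → ℕ
  | .L => p - 1
  | .R => p + 1
  | .N => p

def moveWork (wl : List WSym) (c : WSym) (wr : List WSym) : Move → List WSym × WSym × List WSym
  | .L => match wl with
    | [] => ([], .blank, c :: wr)
    | a :: l => (l, a, c :: wr)
  | .R => match wr with
    | [] => (c :: wl, .blank, [])
    | a :: r => (c :: wl, a, r)
  | .N => (wl, c, wr)

/-- One transition of the TM `M` on input `i`. -/
def TMStep (M : TM) (i : List Bool) (c c' : Config M) : Prop :=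
  ∃ q' w mi mw, M.δ c.q (inputAt i c.ipos) c.wcur = some (q', w, mi, mw) ∧
    c'.q = q' ∧ c'.ipos = moveIpos c.ipos mi ∧
    (c'.wl, c'.wcur, c'.wr) = moveWork c.wl w c.wr mw

def initConfig (M : TM) : Config M := ⟨M.start, 0, [], .blank, []⟩

/-- Number of work-tape cells used by a configuration. -/
def Config.workSize {M : TM} (c : Config M) : ℕ := c.wl.length + 1 + c.wr.length

def TMFinal (M : TM) (i : List Bool) (c : Config M) : Prop := ∀ c', ¬ TMStep M i c c'

/-- `⟨1⟩ := λx.λy.x` and `⟨0⟩ := λx.λy.y`. -/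
def encBool (b : Bool) : Term :=
  if b then .lam 0 (.lam 1 (.var 0)) else .lam 0 (.lam 1 (.var 1))

/-! On states reachable from a closed term of `Λdet`, every closure in an environment or on the
stack is a closed abstraction. Hence each KAM transition is simulated by the same LAM transition,
except `→seav`, which becomes `→sea →sub →ret`, and `→sea¬v`, which becomes `→sea →ret`. As the LAM
is deterministic, these are exactly its runs to the next empty dump. The only LAM states not of the
form `(ε, s)` are the intermediate ones of these runs, whose size is at most that of the next KAM
state plus twice that of the previous one (which bounds `x` and `e|x`), whence the constant `3`. -/

namespace Env

theorem lookup_restrict {s : Finset ℕ} {x : ℕ} (hx : x ∈ s) :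
    ∀ e : Env, (e.restrict s).lookup x = e.lookup x
  | .nil => rfl
  | .cons y c e => by
    by_cases hy : y ∈ s
    · simp only [restrict, hy, if_true, lookup, lookup_restrict hx e]
    · have hyx : y ≠ x := fun h => hy (h ▸ hx)
      simp only [restrict, hy, if_false, lookup, hyx, lookup_restrict hx e]

theorem dom_restrict (s : Finset ℕ) : ∀ e : Env, (e.restrict s).dom = e.dom ∩ s
  | .nil => by simp [restrict, dom]
  | .cons y c e => by
    by_cases hy : y ∈ s
    · simp only [restrict, hy, if_true, dom, dom_restrict s e, Finset.insert_inter_of_mem hy]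
    · simp only [restrict, hy, if_false, dom, dom_restrict s e,
        Finset.insert_inter_of_notMem hy]

theorem sizeE_restrict_le (t0 : Term) (s : Finset ℕ) :
    ∀ e : Env, (e.restrict s).sizeE t0 ≤ e.sizeE t0
  | .nil => le_rfl
  | .cons y c e => by
    have ih := sizeE_restrict_le t0 s e
    by_cases hy : y ∈ s
    · simp only [restrict, hy, if_true, sizeE]; omega
    · simp only [restrict, hy, if_false, sizeE]; omega

theorem exists_lookup_of_mem_dom {x : ℕ} : ∀ {e : Env}, x ∈ e.dom → ∃ c, e.lookup x = some c
  | .cons y c e, h => by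
    by_cases hyx : y = x
    · exact ⟨c, by simp [lookup, hyx]⟩
    · simp only [dom, Finset.mem_insert, Ne.symm hyx, false_or] at h
      simpa [lookup, hyx] using exists_lookup_of_mem_dom h

theorem addrSize_var_le_sizeE_of_lookup (t0 : Term) {x : ℕ} {c : Clo} :
    ∀ {e : Env}, e.lookup x = some c → addrSize t0 (.var x) ≤ e.sizeE t0
  | .cons y c' e, h => by
    by_cases hyx : y = x
    · subst hyx; simp only [sizeE]; omega
    · simp only [lookup, hyx, if_false] at h
      have := addrSize_var_le_sizeE_of_lookup t0 h
      simp only [sizeE]; omega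

end Env

mutual
  def Clo.Valid : Clo → Prop
    | .mk t e => (∃ y r, t = .lam y r) ∧ t.IsDet ∧ t.fv ⊆ e.dom ∧ Env.Valid e
  def Env.Valid : Env → Prop
    | .nil => True
    | .cons _ c e => Clo.Valid c ∧ Env.Valid e
end

def State.Valid (s : State) : Prop :=
  s.tm.IsDet ∧ s.tm.fv ⊆ s.env.dom ∧ s.env.Valid ∧ ∀ c ∈ s.stk, c.Valid

theorem Env.Valid.restrict (s : Finset ℕ) : ∀ {e : Env}, e.Valid → (e.restrict s).Valid
  | .nil, _ => trivial
  | .cons y c e, ⟨hc, he⟩ => by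
    by_cases hy : y ∈ s
    · simp only [Env.restrict, hy, if_true]
      exact ⟨hc, he.restrict s⟩
    · simpa only [Env.restrict, hy, if_false] using he.restrict s

theorem Env.Valid.lookup {x : ℕ} {c : Clo} : ∀ {e : Env}, e.Valid → e.lookup x = some c → c.Valid
  | .cons y c' e, ⟨hc', he⟩, h => by
    by_cases hyx : y = x
    · simp only [Env.lookup, hyx, if_true, Option.some.injEq] at h
      exact h ▸ hc'
    · simp only [Env.lookup, hyx, if_false] at h
      exact he.lookup h

theorem fv_subset_dom_restrict {t : Term} {s : Finset ℕ} {e : Env} (hs : t.fv ⊆ s)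
    (he : s ⊆ e.dom) : t.fv ⊆ (e.restrict t.fv).dom := by
  rw [Env.dom_restrict]
  exact fun y hy => Finset.mem_inter.2 ⟨he (hs hy), hy⟩

theorem State.Valid.app_arg_var_or_lam {t u : Term} {e : Env} {S : List Clo}
    (hs : State.Valid ⟨.app t u, e, S⟩) :
    (∃ x c, u = .var x ∧ e.lookup x = some c) ∨ ∃ y r, u = .lam y r := by
  obtain ⟨⟨-, -, hu⟩, hfv, -⟩ := hs
  rcases hu with ⟨x, rfl⟩ | hu
  · have hx : x ∈ e.dom := hfv (by simp [Term.fv])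
    exact Or.inl ⟨x, (Env.exists_lookup_of_mem_dom hx).imp fun _ h => ⟨rfl, h⟩⟩
  · exact Or.inr hu

theorem State.Valid.sk_step {s s' : State} (hs : s.Valid) (h : SK s s') : s'.Valid := by
  obtain ⟨hdet, hfv, he, hS⟩ := hs
  cases h with
  | seav S hlook =>
    refine ⟨hdet.1, fv_subset_dom_restrict Finset.subset_union_left hfv, he.restrict _, ?_⟩
    rintro c (_ | ⟨_, hc⟩)
    exacts [he.lookup hlook, hS c hc]
  | @seanv t u e S hnv =>
    refine ⟨hdet.1, fv_subset_dom_restrict Finset.subset_union_left hfv, he.restrict _, ?_⟩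
    rintro c (_ | ⟨_, hc⟩)
    · refine ⟨?_, hdet.2.1, fv_subset_dom_restrict Finset.subset_union_right hfv, he.restrict _⟩
      exact hdet.2.2.resolve_left fun ⟨x, hx⟩ => hnv x hx
    · exact hS c hc
  | @betaw x t e c S hx =>
    refine ⟨hdet, fun y hy => hfv ?_, he, fun c hc => hS c (List.mem_cons_of_mem _ hc)⟩
    exact Finset.mem_sdiff.2 ⟨hy, fun h => hx (Finset.mem_singleton.1 h ▸ hy)⟩
  | @betanw x t e c S hx =>
    refine ⟨hdet, fun y hy => ?_, ⟨hS c List.mem_cons_self, he⟩,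
      fun c hc => hS c (List.mem_cons_of_mem _ hc)⟩
    by_cases hyx : y = x
    · simp [Env.dom, hyx]
    · exact Finset.mem_insert_of_mem (hfv (Finset.mem_sdiff.2 ⟨hy, by simpa using hyx⟩))
  | sub S hlook =>
    obtain ⟨-, hdet', hfv', he'⟩ := he.lookup hlook
    exact ⟨hdet', hfv', he', hS⟩

theorem State.valid_of_reachable {t0 : Term} (hc : t0.closed) (hd : t0.IsDet) {s : State}
    (h : Relation.ReflTransGen SK (initState t0) s) : s.Valid := by
  induction h with
  | refl => exact ⟨hd, by simp [initState, Env.dom, show t0.fv = ∅ from hc], trivial, by simp [initState]⟩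
  | tail _ hstep ih => exact ih.sk_step hstep

theorem LAM.deterministic {a b c : LState} (hb : LAM a b) (hc : LAM a c) : b = c := by
  cases hb <;> cases hc <;> first
    | rfl
    | contradiction
    | (simp_all only [Option.some.injEq, Clo.mk.injEq])

theorem LRunToEmpty.exists_lam_step {a b : LState} (h : LRunToEmpty a b) : ∃ c, LAM a c := by
  cases h with
  | single h _ => exact ⟨_, h⟩
  | cons h _ _ => exact ⟨_, h⟩

theorem LRunToEmpty.unique {a b c : LState} (hb : LRunToEmpty a b) (hc : LRunToEmpty a c) :
    b = c := by
  induction hb generalizing c with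
  | single hab hb =>
    cases hc with
    | single hac _ => exact hab.deterministic hac
    | cons hac hne _ => exact absurd (hab.deterministic hac ▸ hb) hne
  | cons hab hne _ ih =>
    cases hc with
    | single hac hc => exact absurd (hab.deterministic hac ▸ hc) hne
    | cons hac _ hrest => exact ih (hab.deterministic hac ▸ hrest)

theorem State.Valid.lam_run_of_sk_step {s s' : State} (hs : s.Valid) (h : SK s s') :
    ∃ j, 1 ≤ j ∧ j ≤ 3 ∧ NSteps LAM j (embed s) (embed s') ∧ LRunToEmpty (embed s) (embed s') := by
  cases h with
  | @seav t x e c S hlook =>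
    obtain ⟨u, eC⟩ := c
    obtain ⟨⟨y, r, rfl⟩, -⟩ := hs.2.2.1.lookup hlook
    have hlk : (e.restrict (Term.var x).fv).lookup x = some (.mk (.lam y r) eC) :=
      (Env.lookup_restrict (by simp [Term.fv]) e).trans hlook
    exact ⟨3, by norm_num, le_rfl, .head .sea (.head (.sub hlk) (.head .ret (.refl _))),
      .cons .sea (by simp) (.cons (.sub hlk) (by simp) (.single .ret rfl))⟩
  | seanv S hnv =>
    obtain ⟨y, r, rfl⟩ := hs.1.2.2.resolve_left fun ⟨x, hx⟩ => hnv x hx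
    exact ⟨2, by norm_num, by norm_num, .head .sea (.head .ret (.refl _)),
      .cons .sea (by simp) (.single .ret rfl)⟩
  | betaw c S hx => exact ⟨1, le_rfl, by norm_num, .head (.betaw hx) (.refl _), .single (.betaw hx) rfl⟩
  | betanw c S hx => exact ⟨1, le_rfl, by norm_num, .head (.betanw hx) (.refl _), .single (.betanw hx) rfl⟩
  | sub S hlook => exact ⟨1, le_rfl, by norm_num, .head (.sub hlook) (.refl _), .single (.sub hlook) rfl⟩

theorem State.Valid.exists_sk_step {s : State} {ls : LState} (hs : s.Valid)
    (h : LAM (embed s) ls) : ∃ s', SK s s' := by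
  obtain ⟨t, e, S⟩ := s
  cases h with
  | @sea _ t u =>
    rcases hs.app_arg_var_or_lam with ⟨x, c, rfl, hlook⟩ | ⟨y, r, rfl⟩
    · exact ⟨_, .seav S hlook⟩
    · exact ⟨_, .seanv S fun _ => Term.noConfusion⟩
  | betaw hx => exact ⟨_, .betaw _ _ hx⟩
  | betanw hx => exact ⟨_, .betanw _ _ hx⟩
  | sub hlook => exact ⟨_, .sub S hlook⟩

theorem State.Valid.lFinal_embed {s : State} (hs : s.Valid) (hfin : SKFinal s) :
    LFinal (embed s) := fun _ h =>
  let ⟨s', hs'⟩ := hs.exists_sk_step h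
  hfin s' hs'

theorem State.Valid.sk_step_of_lRunToEmpty {s : State} {ls : LState} (hs : s.Valid)
    (h : LRunToEmpty (embed s) ls) : ∃ s', ls = embed s' ∧ SK s s' := by
  obtain ⟨s', hstep⟩ := hs.exists_sk_step h.exists_lam_step.choose_spec
  obtain ⟨-, -, -, -, hrun⟩ := hs.lam_run_of_sk_step hstep
  exact ⟨s', h.unique hrun, hstep⟩

theorem NSteps.reflTransGen {α : Type _} {R : α → α → Prop} {n : ℕ} {a b : α}
    (h : NSteps R n a b) : Relation.ReflTransGen R a b := by
  induction h with
  | refl => exact .refl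
  | head hab _ ih => exact .head hab ih

theorem lam_reachable_embed {t0 : Term} (hc : t0.closed) (hd : t0.IsDet) {s : State}
    (h : Relation.ReflTransGen SK (initState t0) s) :
    Relation.ReflTransGen LAM (lInit t0) (embed s) := by
  induction h with
  | refl => exact .refl
  | tail hreach hstep ih =>
    obtain ⟨_, -, -, hsteps, -⟩ :=
      (State.valid_of_reachable hc hd hreach).lam_run_of_sk_step hstep
    exact ih.trans hsteps.reflTransGen

/-- The LAM states met while simulating a KAM run: `embed s`, the state right after the `→sea`
leaving `embed s`, and the state right before the `→ret` that reaches `embed s`. -/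
inductive LamStage : State → LState → Prop
  | embed (s : State) : LamStage s (embed s)
  | sea (t u : Term) (e : Env) (S : List Clo) :
      LamStage ⟨.app t u, e, S⟩ ⟨[(.mk t (e.restrict t.fv), S)], u, e.restrict u.fv, []⟩
  | ret (t : Term) (e : Env) (u : Term) (eC : Env) (S : List Clo) :
      LamStage ⟨t, e, .mk u eC :: S⟩ ⟨[(.mk t e, S)], u, eC, []⟩

theorem State.Valid.lamStage_step {s : State} {ls ls' : LState} (hs : s.Valid)
    (h : LamStage s ls) (hstep : LAM ls ls') :
    ∃ s', Relation.ReflGen SK s s' ∧ LamStage s' ls' := by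
  cases h with
  | embed =>
    obtain ⟨t, e, S⟩ := s
    cases hstep with
    | sea => exact ⟨_, .refl, .sea ..⟩
    | betaw hx => exact ⟨_, .single (.betaw _ _ hx), .embed _⟩
    | betanw hx => exact ⟨_, .single (.betanw _ _ hx), .embed _⟩
    | sub hlook => exact ⟨_, .single (.sub _ hlook), .embed _⟩
  | sea t u e S =>
    rcases hs.app_arg_var_or_lam with ⟨x, ⟨u', eC⟩, rfl, hlook⟩ | ⟨y, r, rfl⟩
    · cases hstep with
      | sub hlk =>
        rw [Env.lookup_restrict (by simp [Term.fv]) e, hlook] at hlk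
        cases hlk
        exact ⟨_, .single (.seav S hlook), .ret ..⟩
    · cases hstep with
      | ret => exact ⟨_, .single (.seanv S fun _ => Term.noConfusion), .embed _⟩
  | ret t e u eC S =>
    obtain ⟨y, r, rfl⟩ := (hs.2.2.2 _ List.mem_cons_self).1
    cases hstep with
    | ret => exact ⟨_, .refl, .embed _⟩

theorem exists_lamStage_of_lam_reachable {t0 : Term} (hc : t0.closed) (hd : t0.IsDet)
    {ls : LState} (h : Relation.ReflTransGen LAM (lInit t0) ls) :
    ∃ s, Relation.ReflTransGen SK (initState t0) s ∧ LamStage s ls := by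
  induction h with
  | refl => exact ⟨_, .refl, .embed (initState t0)⟩
  | tail _ hstep ih =>
    obtain ⟨s, hreach, hstage⟩ := ih
    obtain ⟨s', hss', hstage'⟩ :=
      (State.valid_of_reachable hc hd hreach).lamStage_step hstage hstep
    exact ⟨s', hreach.trans hss'.to_reflTransGen, hstage'⟩

theorem LState.size_embed (t0 : Term) (s : State) : (embed s).size t0 = s.size t0 := by
  simp [embed, LState.size, State.size]

theorem LState.size_ret_stage (t0 t : Term) (e : Env) (u : Term) (eC : Env) (S : List Clo) :
    LState.size t0 ⟨[(.mk t e, S)], u, eC, []⟩ = State.size t0 ⟨t, e, .mk u eC :: S⟩ := by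
  simp only [LState.size, State.size, stackSize, Clo.size, List.map_cons, List.map_nil,
    List.sum_cons, List.sum_nil]
  omega

theorem LState.size_sea_stage_le {t0 t u : Term} {e : Env} {S : List Clo} {s' : State}
    (h : SK ⟨.app t u, e, S⟩ s') :
    LState.size t0 ⟨[(.mk t (e.restrict t.fv), S)], u, e.restrict u.fv, []⟩ ≤
      s'.size t0 + 2 * State.size t0 ⟨.app t u, e, S⟩ := by
  cases h with
  | @seav _ x _ c _ hlook =>
    have hx := Env.addrSize_var_le_sizeE_of_lookup t0 hlook
    have hex := Env.sizeE_restrict_le t0 (Term.var x).fv e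
    simp only [LState.size, State.size, stackSize, Clo.size, List.map_cons, List.map_nil,
      List.sum_cons, List.sum_nil]
    omega
  | seanv =>
    simp only [LState.size, State.size, stackSize, Clo.size, List.map_cons, List.map_nil,
      List.sum_cons, List.sum_nil]
    omega

theorem LamStage.exists_size_le {t0 : Term} {s : State} {ls : LState}
    (hreach : Relation.ReflTransGen SK (initState t0) s) (hs : s.Valid) (h : LamStage s ls) :
    ∃ s', Relation.ReflTransGen SK (initState t0) s' ∧ ls.size t0 ≤ 3 * (s'.size t0 + 1) := by
  cases h with
  | embed => exact ⟨s, hreach, by rw [LState.size_embed]; omega⟩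
  | ret => exact ⟨_, hreach, by rw [LState.size_ret_stage]; omega⟩
  | sea t u e S =>
    obtain ⟨s', hstep⟩ := hs.exists_sk_step (.sea (D := []))
    have hle := LState.size_sea_stage_le (t0 := t0) hstep
    rcases le_total (s'.size t0) (State.size t0 ⟨.app t u, e, S⟩) with hs' | hs'
    · exact ⟨_, hreach, by omega⟩
    · exact ⟨s', hreach.tail hstep, by omega⟩

/-- the Space KAM and the Space LAM are weakly bisimilar on
`Λdet` (via `R : s ↦ (ε, s)`), the complete runs correspond, and the space
consumptions agree up to a fixed constant overhead. -/
theorem space_kam_lam_weak_bisimulation :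
    ∃ k : ℕ, 0 < k ∧ ∀ t0 : Term, t0.closed → t0.IsDet →
      (∀ s s' : State, Relation.ReflTransGen SK (initState t0) s → SK s s' →
        ∃ j : ℕ, 1 ≤ j ∧ j ≤ 3 ∧ NSteps LAM j (embed s) (embed s')) ∧
      (∀ (s : State) (ls' : LState),
        Relation.ReflTransGen SK (initState t0) s → LRunToEmpty (embed s) ls' →
        ∃ s' : State, ls' = embed s' ∧ (s' = s ∨ SK s s')) ∧
      (∀ s : State, Relation.ReflTransGen SK (initState t0) s → SKFinal s →
        Relation.ReflTransGen LAM (lInit t0) (embed s) ∧ LFinal (embed s)) ∧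
      (∀ ls : LState, Relation.ReflTransGen LAM (lInit t0) ls →
        ∃ s : State, Relation.ReflTransGen SK (initState t0) s ∧
          ls.size t0 ≤ k * (s.size t0 + 1)) ∧
      (∀ s : State, Relation.ReflTransGen SK (initState t0) s →
        ∃ ls : LState, Relation.ReflTransGen LAM (lInit t0) ls ∧
          s.size t0 ≤ k * (ls.size t0 + 1)) := by
  refine ⟨3, by norm_num, fun t0 hc hd => ⟨?_, ?_, ?_, ?_, ?_⟩⟩
  · intro s s' hreach hstep
    obtain ⟨j, hj1, hj3, hsteps, -⟩ :=
      (State.valid_of_reachable hc hd hreach).lam_run_of_sk_step hstep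
    exact ⟨j, hj1, hj3, hsteps⟩
  · intro s ls' hreach hrun
    obtain ⟨s', rfl, hstep⟩ := (State.valid_of_reachable hc hd hreach).sk_step_of_lRunToEmpty hrun
    exact ⟨s', rfl, .inr hstep⟩
  · intro s hreach hfin
    exact ⟨lam_reachable_embed hc hd hreach,
      (State.valid_of_reachable hc hd hreach).lFinal_embed hfin⟩
  · intro ls hreach
    obtain ⟨s, hs, hstage⟩ := exists_lamStage_of_lam_reachable hc hd hreach
    exact hstage.exists_size_le hs (State.valid_of_reachable hc hd hs)
  · intro s hreach
    exact ⟨embed s, lam_reachable_embed hc hd hreach, by rw [LState.size_embed]; omega⟩
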